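/- Let T = [[A, B],[C, −A*]] be a nonnegative diagonally dominant Hamiltonian on H × H with iℝ ⊆ ρ(A). Then every point of the imaginary axis is a point of regular type for T: for each t ∈ ℝ there is c > 0 with ‖(T − it)x‖ ≥ c‖x‖ for all x ∈ D(T) = D(A) × D(A*). -/

import Mathlib

/-!
Fix `z = it` and let `R = (A - z)⁻¹`; then `R†` is the resolvent of `A†` at `-z`. For
`(f, g) = (T - z)(u, v)`, the `A`- and `z`-terms cancel in `Re (⟪f, v⟫ + ⟪g, u⟫)`, leaving
`⟪B v, v⟫ + ⟪C u, u⟫ ≤ ‖(f, g)‖ (‖u‖ + ‖v‖)`. Next `u = R f - R B v` and `v = R† C u - R† g`, and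
Cauchy–Schwarz for the nonnegative form of `B` gives `‖R B v‖² ≤ ‖B R†‖ ‖R‖ ⟪B v, v⟫`, where
`B R†` is bounded by the closed graph theorem since `B` is symmetric; likewise for `R† C u` with
`C R`. Combining the three estimates by AM–GM bounds `‖u‖ + ‖v‖` by a multiple of `‖(f, g)‖`.
-/

/-- `Rz` is a (bounded, everywhere defined) resolvent operator for `S` at `z`. -/
def HasRes {V : Type*} [NormedAddCommGroup V] [NormedSpace ℂ V]
    (S : V →ₗ.[ℂ] V) (z : ℂ) (Rz : V →L[ℂ] V) : Prop :=
  (∀ y : V, ∃ h : Rz y ∈ S.domain, S ⟨Rz y, h⟩ - z • Rz y = y) ∧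
  (∀ x : S.domain, Rz (S x - z • (x : V)) = (x : V))

open scoped ComplexConjugate InnerProductSpace InnerProduct
open Filter Topology

theorem ContinuousLinearMap.denseRange_adjoint_of_injective {𝕜 E F : Type*} [RCLike 𝕜]
    [NormedAddCommGroup E] [InnerProductSpace 𝕜 E] [CompleteSpace E] [NormedAddCommGroup F]
    [InnerProductSpace 𝕜 F] [CompleteSpace F] {T : E →L[𝕜] F} (hT : Function.Injective T) :
    DenseRange (T†) := by
  change Dense ((T†).range : Set E)
  rw [Submodule.dense_iff_topologicalClosure_eq_top, Submodule.topologicalClosure_eq_top_iff,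
    orthogonal_range, adjoint_adjoint, LinearMap.ker_eq_bot]
  exact hT

namespace HasRes

section Normed

variable {V : Type*} [NormedAddCommGroup V] [NormedSpace ℂ V] {S : V →ₗ.[ℂ] V} {z : ℂ}
  {Rz : V →L[ℂ] V}

theorem mem_domain (h : HasRes S z Rz) (y : V) : Rz y ∈ S.domain := (h.1 y).fst

theorem apply_sub_smul (h : HasRes S z Rz) (y : V) :
    S ⟨Rz y, h.mem_domain y⟩ - z • Rz y = y := (h.1 y).snd

theorem injective (h : HasRes S z Rz) : Function.Injective Rz := fun a b hab => by
  have hdom : (⟨Rz a, h.mem_domain a⟩ : S.domain) = ⟨Rz b, h.mem_domain b⟩ := Subtype.ext hab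
  rw [← h.apply_sub_smul a, ← h.apply_sub_smul b, hdom, hab]

theorem denseRange (h : HasRes S z Rz) (hS : Dense (S.domain : Set V)) : DenseRange Rz :=
  hS.mono fun x hx => ⟨_, h.2 ⟨x, hx⟩⟩

theorem norm_le (h : HasRes S z Rz) {x : S.domain} {w y : V} (hx : S x - z • (x : V) = w + y) :
    ‖(x : V)‖ ≤ ‖Rz‖ * ‖w‖ + ‖Rz y‖ :=
  calc ‖(x : V)‖ = ‖Rz w + Rz y‖ := by rw [← map_add, ← hx, h.2 x]
    _ ≤ ‖Rz‖ * ‖w‖ + ‖Rz y‖ := (norm_add_le _ _).trans (by gcongr; exact Rz.le_opNorm w)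

end Normed

variable {H : Type*} [NormedAddCommGroup H] [InnerProductSpace ℂ H] [CompleteSpace H]
  {S : H →ₗ.[ℂ] H} {z : ℂ} {Rz : H →L[ℂ] H}

theorem adjoint (h : HasRes S z Rz) (hS : Dense (S.domain : Set H)) :
    HasRes (LinearPMap.adjoint S) (conj z) (Rz†) := by
  have hRz_apply : ∀ x : S.domain, Rz (S x) = (x : H) + z • Rz x := fun x =>
    eq_add_of_sub_eq (by rw [← map_smul, ← map_sub, h.2 x])
  have hpair : ∀ y : H, ∀ x : S.domain, ⟪y + conj z • (Rz†) y, (x : H)⟫_ℂ = ⟪(Rz†) y, S x⟫_ℂ :=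
    fun y x => by
      rw [ContinuousLinearMap.adjoint_inner_left, hRz_apply, inner_add_left, inner_add_right,
        inner_smul_left, inner_smul_right, ContinuousLinearMap.adjoint_inner_left,
        Complex.conj_conj]
  refine ⟨fun y => ?_, fun v => ?_⟩
  · have hmem := LinearPMap.mem_adjoint_domain_of_exists (T := S) _ ⟨_, hpair y⟩
    refine ⟨hmem, ?_⟩
    rw [LinearPMap.adjoint_apply_eq hS ⟨_, hmem⟩ (hpair y), add_sub_cancel_right]
  · refine ext_inner_right ℂ fun w => ?_
    rw [ContinuousLinearMap.adjoint_inner_left, inner_sub_left, inner_smul_left, Complex.conj_conj,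
      LinearPMap.adjoint_isFormalAdjoint hS v ⟨Rz w, h.mem_domain w⟩, ← inner_smul_right,
      ← inner_sub_right, h.apply_sub_smul]

end HasRes

section

variable {𝕜 H : Type*} [RCLike 𝕜] [NormedAddCommGroup H] [InnerProductSpace 𝕜 H]
  {B : H →ₗ.[𝕜] H}

/-- Cauchy–Schwarz for the semi-inner product `(x, y) ↦ ⟪B x, y⟫` on `B.domain`. -/
theorem LinearPMap.norm_inner_sq_le (hBsym : B.IsFormalAdjoint B)
    (hBpos : ∀ x : B.domain, 0 ≤ RCLike.re ⟪B x, (x : H)⟫_𝕜) (x y : B.domain) :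
    ‖⟪B x, (y : H)⟫_𝕜‖ ^ 2 ≤ RCLike.re ⟪B x, (x : H)⟫_𝕜 * RCLike.re ⟪B y, (y : H)⟫_𝕜 := by
  let form : PreInnerProductSpace.Core 𝕜 B.domain :=
    { inner x y := ⟪B x, (y : H)⟫_𝕜
      conj_inner_symm x y := by rw [inner_conj_symm, hBsym]
      re_inner_nonneg := hBpos
      add_left x y z := by simp [B.map_add, inner_add_left]
      smul_left x y r := by simp [B.map_smul, inner_smul_left] }
  have h : ‖⟪B x, (y : H)⟫_𝕜‖ * ‖⟪B y, (x : H)⟫_𝕜‖ ≤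
      RCLike.re ⟪B x, (x : H)⟫_𝕜 * RCLike.re ⟪B y, (y : H)⟫_𝕜 :=
    @InnerProductSpace.Core.inner_mul_inner_self_le 𝕜 _ _ _ _ form x y
  rwa [hBsym y x, norm_inner_symm (y : H), ← sq] at h

/-- The closed graph theorem, as in the proof of Hellinger–Toeplitz. -/
theorem LinearPMap.IsFormalAdjoint.exists_clm_eq_comp [CompleteSpace H] {E : Type*}
    [NormedAddCommGroup E] [NormedSpace 𝕜 E] [CompleteSpace E] (hBsym : B.IsFormalAdjoint B)
    {W : E →L[𝕜] H} (hW : ∀ w, W w ∈ B.domain) (hWd : DenseRange W) :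
    ∃ L : E →L[𝕜] H, ∀ w, L w = B ⟨W w, hW w⟩ := by
  let g : E →ₗ[𝕜] H := B.toFun ∘ₗ (W : E →ₗ[𝕜] H).codRestrict B.domain hW
  refine ⟨⟨g, g.continuous_of_seq_closed_graph fun s x y hs hgs => ?_⟩, fun _ => rfl⟩
  refine hWd.eq_of_inner_left 𝕜 fun d => tendsto_nhds_unique (hgs.inner tendsto_const_nhds) ?_
  have hBWd : Tendsto (fun n => ⟪W (s n), B ⟨W d, hW d⟩⟫_𝕜) atTop (𝓝 ⟪W x, B ⟨W d, hW d⟩⟫_𝕜) :=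
    ((W.continuous.tendsto x).comp hs).inner tendsto_const_nhds
  convert hBWd using 1
  · exact funext fun n => hBsym ⟨W (s n), hW _⟩ ⟨W d, hW d⟩
  · exact congrArg 𝓝 (hBsym ⟨W x, hW x⟩ ⟨W d, hW d⟩)

theorem ContinuousLinearMap.norm_adjoint_apply_sq_le [CompleteSpace H] {E : Type*}
    [NormedAddCommGroup E] [InnerProductSpace 𝕜 E] [CompleteSpace E] (hBsym : B.IsFormalAdjoint B)
    (hBpos : ∀ x : B.domain, 0 ≤ RCLike.re ⟪B x, (x : H)⟫_𝕜) {V : E →L[𝕜] H}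
    (hV : ∀ w, V w ∈ B.domain) {L : E →L[𝕜] H} (hL : ∀ w, L w = B ⟨V w, hV w⟩) (x : B.domain) :
    ‖(V†) (B x)‖ ^ 2 ≤ ‖L‖ * ‖V‖ * RCLike.re ⟪B x, (x : H)⟫_𝕜 := by
  set e := (V†) (B x)
  set y : B.domain := ⟨V e, hV e⟩
  have he : ‖e‖ ^ 2 ≤ ‖⟪B x, (y : H)⟫_𝕜‖ := by
    have hee : ⟪e, e⟫_𝕜 = ⟪B x, (y : H)⟫_𝕜 := adjoint_inner_left V e (B x)
    rw [← inner_self_eq_norm_sq (𝕜 := 𝕜), hee]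
    exact RCLike.re_le_norm _
  have hy : RCLike.re ⟪B y, (y : H)⟫_𝕜 ≤ ‖L‖ * ‖V‖ * ‖e‖ ^ 2 :=
    calc RCLike.re ⟪B y, (y : H)⟫_𝕜 ≤ ‖L e‖ * ‖V e‖ := by
          rw [hL]; exact (RCLike.re_le_norm _).trans (norm_inner_le_norm _ _)
      _ ≤ ‖L‖ * ‖e‖ * (‖V‖ * ‖e‖) := by gcongr <;> apply le_opNorm
      _ = ‖L‖ * ‖V‖ * ‖e‖ ^ 2 := by ring
  have hsq : (‖e‖ ^ 2) ^ 2 ≤ (‖L‖ * ‖V‖ * RCLike.re ⟪B x, (x : H)⟫_𝕜) * ‖e‖ ^ 2 :=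
    calc (‖e‖ ^ 2) ^ 2 ≤ ‖⟪B x, (y : H)⟫_𝕜‖ ^ 2 := by gcongr
      _ ≤ RCLike.re ⟪B x, (x : H)⟫_𝕜 * RCLike.re ⟪B y, (y : H)⟫_𝕜 :=
        LinearPMap.norm_inner_sq_le hBsym hBpos x y
      _ ≤ RCLike.re ⟪B x, (x : H)⟫_𝕜 * (‖L‖ * ‖V‖ * ‖e‖ ^ 2) := by gcongr; exact hBpos x
      _ = (‖L‖ * ‖V‖ * RCLike.re ⟪B x, (x : H)⟫_𝕜) * ‖e‖ ^ 2 := by ring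
  have hc : 0 ≤ ‖L‖ * ‖V‖ * RCLike.re ⟪B x, (x : H)⟫_𝕜 := mul_nonneg (by positivity) (hBpos x)
  nlinarith

end

/-- The `A`-terms cancel because `A†` is a formal adjoint of `A`, the `z`-terms because `z` is
purely imaginary. -/
theorem LinearPMap.re_inner_hamiltonian_eq {H : Type*} [NormedAddCommGroup H]
    [InnerProductSpace ℂ H] [CompleteSpace H] {A : H →ₗ.[ℂ] H} (hA : Dense (A.domain : Set H))
    (u : A.domain) (v : A.adjoint.domain) (b c : H) {z : ℂ} (hz : z.re = 0) :
    (⟪A u + b - z • (u : H), v⟫_ℂ + ⟪c - A.adjoint v - z • (v : H), u⟫_ℂ).re =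
      (⟪b, (v : H)⟫_ℂ).re + (⟪c, (u : H)⟫_ℂ).re := by
  simp only [inner_add_left, inner_sub_left, inner_smul_left]
  rw [← inner_conj_symm (A u : H) (v : H), adjoint_isFormalAdjoint hA v u,
    ← inner_conj_symm (v : H) (u : H)]
  simp only [Complex.add_re, Complex.sub_re, Complex.conj_re, Complex.conj_im, Complex.mul_re, hz]
  ring

/-- With `F = √(p² + q²)` and `S = a + b`, AM–GM gives `r ≤ √(P F S) ≤ P F + S / 4`, and likewise
for `s`. -/
theorem add_le_mul_sqrt_of_bounds {a b p q M P Q r s β γ : ℝ} (ha : 0 ≤ a) (hb : 0 ≤ b)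
    (hM : 0 ≤ M) (hP : 0 ≤ P) (hQ : 0 ≤ Q) (hβ : 0 ≤ β) (hγ : 0 ≤ γ)
    (hβγ : β + γ ≤ p * b + q * a) (har : a ≤ M * p + r) (hr : r ^ 2 ≤ P * β)
    (hbs : b ≤ M * q + s) (hs : s ^ 2 ≤ Q * γ) :
    a + b ≤ 2 * (2 * M + P + Q) * √(p ^ 2 + q ^ 2) := by
  set F := √(p ^ 2 + q ^ 2)
  have hpF : p ≤ F := Real.le_sqrt_of_sq_le (le_add_of_nonneg_right (sq_nonneg _))
  have hqF : q ≤ F := Real.le_sqrt_of_sq_le (le_add_of_nonneg_left (sq_nonneg _))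
  have hF : 0 ≤ F := Real.sqrt_nonneg _
  have hβγF : β + γ ≤ F * (a + b) := by nlinarith
  have hr' : r ≤ P * F + (a + b) / 4 := by
    refine le_of_pow_le_pow_left₀ two_ne_zero (by positivity) (hr.trans ?_)
    nlinarith [sq_nonneg (P * F - (a + b) / 4)]
  have hs' : s ≤ Q * F + (a + b) / 4 := by
    refine le_of_pow_le_pow_left₀ two_ne_zero (by positivity) (hs.trans ?_)
    nlinarith [sq_nonneg (Q * F - (a + b) / 4)]
  nlinarith

theorem hamiltonian_norm_add_norm_le {H : Type*} [NormedAddCommGroup H] [InnerProductSpace ℂ H]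
    [CompleteSpace H] {A B C : H →ₗ.[ℂ] H} (hA : Dense (A.domain : Set H))
    (hB : A.adjoint.domain ≤ B.domain) (hC : A.domain ≤ C.domain)
    (hBpos : ∀ x : B.domain, 0 ≤ (⟪B x, (x : H)⟫_ℂ).re)
    (hCpos : ∀ x : C.domain, 0 ≤ (⟪C x, (x : H)⟫_ℂ).re) {z : ℂ} (hz : z.re = 0)
    {R : H →L[ℂ] H} (hR : HasRes A z R) {P Q : ℝ} (hP : 0 ≤ P) (hQ : 0 ≤ Q)
    (hBR : ∀ x : B.domain, ‖R (B x)‖ ^ 2 ≤ P * (⟪B x, (x : H)⟫_ℂ).re)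
    (hCR : ∀ x : C.domain, ‖(R†) (C x)‖ ^ 2 ≤ Q * (⟪C x, (x : H)⟫_ℂ).re)
    (u : A.domain) (v : A.adjoint.domain) :
    ‖(u : H)‖ + ‖(v : H)‖ ≤ 2 * (2 * ‖R‖ + P + Q) *
      √(‖A u + B ⟨v, hB v.2⟩ - z • (u : H)‖ ^ 2 +
        ‖C ⟨u, hC u.2⟩ - A.adjoint v - z • (v : H)‖ ^ 2) := by
  have hconj : conj z = -z := Complex.ext (by simp [hz]) (by simp)
  have hR' : HasRes A.adjoint (-z) (R†) := hconj ▸ hR.adjoint hA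
  set vB : B.domain := ⟨v, hB v.2⟩
  set uC : C.domain := ⟨u, hC u.2⟩
  refine add_le_mul_sqrt_of_bounds (norm_nonneg _) (norm_nonneg _) (norm_nonneg R) hP hQ
    (hBpos vB) (hCpos uC) ?_ ?_ (hBR vB) ?_ (hCR uC)
  · rw [← LinearPMap.re_inner_hamiltonian_eq hA u v _ _ hz]
    exact (Complex.re_le_norm _).trans
      ((norm_add_le _ _).trans (add_le_add (norm_inner_le_norm _ _) (norm_inner_le_norm _ _)))
  · simpa using hR.norm_le (w := A u + B vB - z • (u : H)) (y := -B vB) (by abel)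
  · simpa only [norm_neg, LinearIsometryEquiv.norm_map] using
      hR'.norm_le (w := -(C uC - A.adjoint v - z • (v : H))) (y := C uC) (by module)

theorem hamiltonian_regular_type_on_imaginary_axis_general
    {H : Type*} [NormedAddCommGroup H] [InnerProductSpace ℂ H] [CompleteSpace H]
    (A : H →ₗ.[ℂ] H) (hdense : Dense (A.domain : Set H))
    (hresA : ∀ t : ℝ, ∃ Rz : H →L[ℂ] H, HasRes A ((t : ℂ) * Complex.I) Rz)
    (B C : H →ₗ.[ℂ] H)
    (hB : A.adjoint.domain ≤ B.domain) (hC : A.domain ≤ C.domain)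
    -- B, C symmetric
    (hBsym : ∀ x y : B.domain, (inner ℂ (B x) ((y : H)) : ℂ) = inner ℂ ((x : H)) (B y))
    (hCsym : ∀ x y : C.domain, (inner ℂ (C x) ((y : H)) : ℂ) = inner ℂ ((x : H)) (C y))
    -- B, C nonnegative
    (hBpos : ∀ x : B.domain, 0 ≤ ((inner ℂ (B x) ((x : H)) : ℂ)).re)
    (hCpos : ∀ x : C.domain, 0 ≤ ((inner ℂ (C x) ((x : H)) : ℂ)).re) :
    ∀ t : ℝ, ∃ c > (0 : ℝ), ∀ u : A.domain, ∀ v : A.adjoint.domain,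
      c * Real.sqrt (‖(u : H)‖ ^ 2 + ‖(v : H)‖ ^ 2) ≤
        Real.sqrt
          (‖A u + B ⟨(v : H), hB v.2⟩ - ((t : ℂ) * Complex.I) • (u : H)‖ ^ 2 +
           ‖C ⟨(u : H), hC u.2⟩ - A.adjoint v - ((t : ℂ) * Complex.I) • (v : H)‖ ^ 2) := by
  intro t
  obtain ⟨R, hR⟩ := hresA t
  obtain ⟨LB, hLB⟩ := LinearPMap.IsFormalAdjoint.exists_clm_eq_comp hBsym
    (fun w => hB ((hR.adjoint hdense).mem_domain w))
    (ContinuousLinearMap.denseRange_adjoint_of_injective hR.injective)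
  obtain ⟨LC, hLC⟩ := LinearPMap.IsFormalAdjoint.exists_clm_eq_comp hCsym
    (fun w => hC (hR.mem_domain w)) (hR.denseRange hdense)
  have hBR (x : B.domain) : ‖R (B x)‖ ^ 2 ≤ ‖LB‖ * ‖R‖ * (⟪B x, (x : H)⟫_ℂ).re := by
    simpa using ContinuousLinearMap.norm_adjoint_apply_sq_le hBsym hBpos _ hLB x
  have hest := hamiltonian_norm_add_norm_le hdense hB hC hBpos hCpos (by simp) hR
    (by positivity) (by positivity) hBR
    (ContinuousLinearMap.norm_adjoint_apply_sq_le hCsym hCpos _ hLC)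
  set κ := 2 * (2 * ‖R‖ + ‖LB‖ * ‖R‖ + ‖LC‖ * ‖R‖)
  refine ⟨(κ + 1)⁻¹, by positivity, fun u v => ?_⟩
  rw [inv_mul_le_iff₀ (by positivity)]
  calc √(‖(u : H)‖ ^ 2 + ‖(v : H)‖ ^ 2) ≤ ‖(u : H)‖ + ‖(v : H)‖ :=
        (Real.sqrt_le_left (by positivity)).mpr
          (by nlinarith [norm_nonneg (u : H), norm_nonneg (v : H)])
    _ ≤ κ * _ := hest u v
    _ ≤ (κ + 1) * _ := by gcongr; linarith

/-- for a nonnegative diagonally dominant Hamiltonian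
`T = [[A,B],[C,−A*]]` with `iℝ ⊆ ρ(A)`, every point of the imaginary axis is a point
of regular type of `T`: `‖(T − it)x‖ ≥ c‖x‖` on `D(T) = D(A) × D(A*)`. -/
theorem hamiltonian_regular_type_on_imaginary_axis
    {H : Type*} [NormedAddCommGroup H] [InnerProductSpace ℂ H] [CompleteSpace H]
    (A : H →ₗ.[ℂ] H) (hdense : Dense (A.domain : Set H))
    (hclosed : IsClosed (A.graph : Set (H × H)))
    (hresA : ∀ t : ℝ, ∃ Rz : H →L[ℂ] H, HasRes A ((t : ℂ) * Complex.I) Rz)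
    (B C : H →ₗ.[ℂ] H)
    (hB : A.adjoint.domain ≤ B.domain) (hC : A.domain ≤ C.domain)
    -- B, C symmetric
    (hBsym : ∀ x y : B.domain, (inner ℂ (B x) ((y : H)) : ℂ) = inner ℂ ((x : H)) (B y))
    (hCsym : ∀ x y : C.domain, (inner ℂ (C x) ((y : H)) : ℂ) = inner ℂ ((x : H)) (C y))
    -- B, C nonnegative
    (hBpos : ∀ x : B.domain, 0 ≤ ((inner ℂ (B x) ((x : H)) : ℂ)).re)
    (hCpos : ∀ x : C.domain, 0 ≤ ((inner ℂ (C x) ((x : H)) : ℂ)).re) :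
    ∀ t : ℝ, ∃ c > (0 : ℝ), ∀ u : A.domain, ∀ v : A.adjoint.domain,
      c * Real.sqrt (‖(u : H)‖ ^ 2 + ‖(v : H)‖ ^ 2) ≤
        Real.sqrt
          (‖A u + B ⟨(v : H), hB v.2⟩ - ((t : ℂ) * Complex.I) • (u : H)‖ ^ 2 +
           ‖C ⟨(u : H), hC u.2⟩ - A.adjoint v - ((t : ℂ) * Complex.I) • (v : H)‖ ^ 2) :=
  hamiltonian_regular_type_on_imaginary_axis_general A hdense hresA B C hB hC hBsym hCsym hBpos
    hCpos
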